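/- Let (R, Δ) be an odd form ring with an orthogonal hyperbolic family of rank n ≥ 3 consisting of pairwise Morita equivalent hyperbolic pairs. Then the odd unitary Steinberg group StU(R, Δ), defined by generators X_{ij}(a) (for 0 < |i|,|j| ≤ n, i ≠ ±j, a ∈ R_{ij}) and X_i(u) (for 0 < |i| ≤ n, u ∈ Δ⁰_i) with relations (St0)–(St8), is a perfect group. -/

import Mathlib

open scoped commutatorElement

/-- An odd form ring `(R, Δ)`: a non-unital ring `R` with involution `conj`,
a group `Δ` with a right action of the multiplicative semigroup `R^•` and
structure maps `phi : R → Δ`, `pi ρ : Δ → R` satisfying the odd form ring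
axioms.  The group operation of `Δ` (written `∔` in the paper) is written
multiplicatively here. -/
structure OddForm (R Δ : Type*) [NonUnitalRing R] [Group Δ] where
  conj : R → R
  conj_add : ∀ a b, conj (a + b) = conj a + conj b
  conj_mul : ∀ a b, conj (a * b) = conj b * conj a
  conj_conj : ∀ a, conj (conj a) = a
  act : Δ → R → Δ
  act_mul : ∀ u v a, act (u * v) a = act u a * act v a
  act_act : ∀ u a b, act (act u a) b = act u (a * b)
  phi : R → Δ
  pi : Δ → R
  rho : Δ → R
  pi_mul : ∀ u v, pi (u * v) = pi u + pi v
  pi_act : ∀ u a, pi (act u a) = pi u * a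
  phi_add : ∀ a b, phi (a + b) = phi a * phi b
  phi_act : ∀ a b, act (phi b) a = phi (conj a * b * a)
  rho_mul : ∀ u v, rho (u * v) = rho u - conj (pi u) * pi v + rho v
  rho_act : ∀ u a, rho (act u a) = conj a * rho u * a
  rho_pi : ∀ u, rho u + conj (rho u) + conj (pi u) * pi u = 0
  pi_phi : ∀ a, pi (phi a) = 0
  rho_phi : ∀ a, rho (phi a) = a - conj a
  comm_phi : ∀ u v, ⁅u, v⁆ = phi (-(conj (pi u) * pi v))
  phi_symm : ∀ a, conj a = a → phi a = 1
  act_addR : ∀ u a b, act u (a + b) = act u a * phi (conj b * rho u * a) * act u b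

namespace OddForm

variable {R Δ : Type*} [NonUnitalRing R] [Group Δ]

/-- The action of `a + 1` (an element of the unitalization `R ⋊ ℤ`) on `Δ`:
`u · (a + 1) = u·a ∔ φ(ρ(u) a) ∔ u`. -/
def actA (o : OddForm R Δ) (u : Δ) (a : R) : Δ :=
  o.act u a * o.phi (o.rho u * a) * u

/-- Membership in the unitary group `U(R, Δ)`: for `g = (β, γ)` with `α = β + 1`,
`α⁻¹ = conj α` (expressed without the unitalization) together with `π(γ) = β` and
`ρ(γ) = conj β`. -/
def umem (o : OddForm R Δ) (g : R × Δ) : Prop :=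
  g.1 * o.conj g.1 + g.1 + o.conj g.1 = 0 ∧
  o.conj g.1 * g.1 + o.conj g.1 + g.1 = 0 ∧
  o.pi g.2 = g.1 ∧ o.rho g.2 = o.conj g.1

/-- The group operation of the unitary group: `α(gg') = α(g) α(g')` and
`γ(gg') = γ(g) · α(g') ∔ γ(g')`. -/
def umul (o : OddForm R Δ) (g h : R × Δ) : R × Δ :=
  (g.1 * h.1 + g.1 + h.1, o.actA g.2 h.1 * h.2)

/-- The identity element of the unitary group. -/
def uone (o : OddForm R Δ) : R × Δ := ((0 : R), (1 : Δ))

/-- The inverse in the unitary group: `β(g⁻¹) = conj β(g)`,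
`γ(g⁻¹) = (γ(g) · conj α(g))⁻¹`. -/
def uinv (o : OddForm R Δ) (g : R × Δ) : R × Δ :=
  (o.conj g.1, (o.actA g.2 (o.conj g.1))⁻¹)

end OddForm

namespace OddForm

variable {R Δ : Type*} [NonUnitalRing R] [Group Δ]

/-- The sum `e_{|1|} + … + e_{|n|}` of the idempotents of the orthogonal
hyperbolic family. -/
def esum (e : ℤ → R) (n : ℕ) : R :=
  ((List.range n).map (fun k => e ((k : ℤ) + 1) + e (-((k : ℤ) + 1)))).sum

/-- The hypotheses expressing that `e, q` (indexed by `i ∈ {±1, …, ±n}`) form an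
orthogonal hyperbolic family of rank `n` (without Morita equivalence). -/
def IsOrthHFamily (o : OddForm R Δ) (n : ℕ) (e : ℤ → R) (q : ℤ → Δ) : Prop :=
  (∀ i : ℤ, i ≠ 0 → i.natAbs ≤ n → e i * e i = e i) ∧
  (∀ i : ℤ, i ≠ 0 → i.natAbs ≤ n → o.conj (e i) = e (-i)) ∧
  (∀ i j : ℤ, i ≠ 0 → i.natAbs ≤ n → j ≠ 0 → j.natAbs ≤ n → i ≠ j → e i * e j = 0) ∧
  (∀ i : ℤ, i ≠ 0 → i.natAbs ≤ n → o.pi (q i) = e i) ∧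
  (∀ i : ℤ, i ≠ 0 → i.natAbs ≤ n → o.rho (q i) = 0) ∧
  (∀ i : ℤ, i ≠ 0 → i.natAbs ≤ n → o.act (q i) (e i) = q i)

/-- Morita equivalence of all the hyperbolic pairs of the family:
`e_{|i|} ∈ R e_{|j|} R` for all `i, j`. -/
def IsMoritaFamily (o : OddForm R Δ) (n : ℕ) (e : ℤ → R) : Prop :=
  ∀ i j : ℤ, i ≠ 0 → i.natAbs ≤ n → j ≠ 0 → j.natAbs ≤ n →
    ∃ l : List (R × R),
      e i + e (-i) = (l.map (fun p => p.1 * (e j + e (-j)) * p.2)).sum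

/-- Index data for the short root generators `X_{ij}(a)`, `a ∈ R_{ij}`,
`0 < |i|, |j| ≤ n`, `i ≠ ±j`. -/
def Sub1 (o : OddForm R Δ) (n : ℕ) (e : ℤ → R) : Type _ :=
  {x : ℤ × ℤ × R // x.1 ≠ 0 ∧ x.1.natAbs ≤ n ∧ x.2.1 ≠ 0 ∧ x.2.1.natAbs ≤ n ∧
    x.1 ≠ x.2.1 ∧ x.1 ≠ -x.2.1 ∧ x.2.2 = e x.1 * x.2.2 * e x.2.1}

/-- Index data for the (ultra)short root generators `X_i(u)`, `u ∈ Δ⁰_i`,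
`0 < |i| ≤ n`. -/
def Sub2 (o : OddForm R Δ) (n : ℕ) (e : ℤ → R) : Type _ :=
  {x : ℤ × Δ // x.1 ≠ 0 ∧ x.1.natAbs ≤ n ∧ o.act x.2 (e x.1) = x.2 ∧
    esum e n * o.pi x.2 = 0}

/-- The generators of the odd unitary Steinberg group. -/
def StGen (o : OddForm R Δ) (n : ℕ) (e : ℤ → R) : Type _ :=
  Sub1 o n e ⊕ Sub2 o n e


/-- The generator `X_{ij}(a)` as an element of the free group. -/
def X1 {o : OddForm R Δ} {n : ℕ} {e : ℤ → R} (g : Sub1 o n e) :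
    FreeGroup (StGen o n e) := FreeGroup.of (Sum.inl g)

/-- The generator `X_i(u)` as an element of the free group. -/
def X2 {o : OddForm R Δ} {n : ℕ} {e : ℤ → R} (g : Sub2 o n e) :
    FreeGroup (StGen o n e) := FreeGroup.of (Sum.inr g)

/-- The Steinberg relations (St0)–(St8) as a set of words in the free group on
the generators `X_{ij}(a)` and `X_i(u)`. -/
def stRels (o : OddForm R Δ) (n : ℕ) (e : ℤ → R) :
    Set (FreeGroup (StGen o n e)) :=
  {w |
    -- (St0) X_{ij}(a) = X_{−j,−i}(−ā)
    (∃ g h : Sub1 o n e, h.1.1 = -g.1.2.1 ∧ h.1.2.1 = -g.1.1 ∧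
      h.1.2.2 = -(o.conj g.1.2.2) ∧
      w = X1 g * (X1 h)⁻¹) ∨
    -- (St1) X_{ij}(a) X_{ij}(b) = X_{ij}(a + b)
    (∃ g h k : Sub1 o n e, g.1.1 = h.1.1 ∧ g.1.2.1 = h.1.2.1 ∧
      k.1.1 = g.1.1 ∧ k.1.2.1 = g.1.2.1 ∧ k.1.2.2 = g.1.2.2 + h.1.2.2 ∧
      w = X1 g * X1 h *
        (X1 k)⁻¹) ∨
    -- (St2) X_i(u) X_i(v) = X_i(u ∔ v)
    (∃ g h k : Sub2 o n e, g.1.1 = h.1.1 ∧ k.1.1 = g.1.1 ∧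
      k.1.2 = g.1.2 * h.1.2 ∧
      w = X2 g * X2 h *
        (X2 k)⁻¹) ∨
    -- (St3) [X_{ij}(a), X_{kl}(b)] = 1 for i ≠ l ≠ −j ≠ −k ≠ i
    (∃ g h : Sub1 o n e, g.1.1 ≠ h.1.2.1 ∧ h.1.2.1 ≠ -g.1.2.1 ∧
      g.1.2.1 ≠ h.1.1 ∧ -h.1.1 ≠ g.1.1 ∧
      w = ⁅X1 g, X1 h⁆) ∨
    -- (St4) [X_{ij}(a), X_{jk}(b)] = X_{ik}(ab) for i ≠ ±k
    (∃ g h k : Sub1 o n e, g.1.2.1 = h.1.1 ∧ g.1.1 ≠ h.1.2.1 ∧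
      g.1.1 ≠ -h.1.2.1 ∧ k.1.1 = g.1.1 ∧ k.1.2.1 = h.1.2.1 ∧
      k.1.2.2 = g.1.2.2 * h.1.2.2 ∧
      w = ⁅X1 g, X1 h⁆ *
        (X1 k)⁻¹) ∨
    -- (St5) [X_{ij}(a), X_{j,−i}(b)] = X_{−i}(φ(ab))
    (∃ g h : Sub1 o n e, ∃ k : Sub2 o n e, g.1.2.1 = h.1.1 ∧
      h.1.2.1 = -g.1.1 ∧ k.1.1 = -g.1.1 ∧
      k.1.2 = o.phi (g.1.2.2 * h.1.2.2) ∧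
      w = ⁅X1 g, X1 h⁆ *
        (X2 k)⁻¹) ∨
    -- (St6) [X_i(u), X_j(v)] = X_{−i,j}(−conj(π u) π v) for i ≠ ±j
    (∃ g h : Sub2 o n e, ∃ k : Sub1 o n e, g.1.1 ≠ h.1.1 ∧ g.1.1 ≠ -h.1.1 ∧
      k.1.1 = -g.1.1 ∧ k.1.2.1 = h.1.1 ∧
      k.1.2.2 = -(o.conj (o.pi g.1.2) * o.pi h.1.2) ∧
      w = ⁅X2 g, X2 h⁆ *
        (X1 k)⁻¹) ∨
    -- (St7) [X_i(u), X_{jk}(a)] = 1 for j ≠ i ≠ −k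
    (∃ g : Sub2 o n e, ∃ h : Sub1 o n e, h.1.1 ≠ g.1.1 ∧ g.1.1 ≠ -h.1.2.1 ∧
      w = ⁅X2 g, X1 h⁆) ∨
    -- (St8) [X_i(u), X_{ij}(a)] = X_{−i,j}(ρ(u) a) X_j(∸(u·(−a)))
    (∃ g : Sub2 o n e, ∃ h k : Sub1 o n e, ∃ l : Sub2 o n e,
      h.1.1 = g.1.1 ∧ k.1.1 = -g.1.1 ∧ k.1.2.1 = h.1.2.1 ∧
      k.1.2.2 = o.rho g.1.2 * h.1.2.2 ∧ l.1.1 = h.1.2.1 ∧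
      l.1.2 = (o.act g.1.2 (-h.1.2.2))⁻¹ ∧
      w = ⁅X2 g, X1 h⁆ *
        (X1 k * X2 l)⁻¹)}

/-- The odd unitary Steinberg group `StU(R, Δ)`, presented by the generators
`X_{ij}(a)`, `X_i(u)` and the relations (St0)–(St8). -/
abbrev StU (o : OddForm R Δ) (n : ℕ) (e : ℤ → R) :=
  PresentedGroup (stRels o n e)

end OddForm


namespace OddForm

section Basics

variable {R Δ : Type*} [NonUnitalRing R] [Group Δ] (o : OddForm R Δ)

lemma act_one' (a : R) : o.act 1 a = 1 := by
  have h := o.act_mul 1 1 a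
  rw [one_mul] at h
  have : o.act 1 a * 1 = o.act 1 a * o.act 1 a := by rw [mul_one]; exact h
  exact (mul_left_cancel this).symm

lemma act_inv' (u : Δ) (a : R) : o.act u⁻¹ a = (o.act u a)⁻¹ := by
  have h := o.act_mul u u⁻¹ a
  rw [mul_inv_cancel, act_one'] at h
  exact (inv_eq_of_mul_eq_one_right h.symm).symm

lemma pi_one' : o.pi (1 : Δ) = 0 := by
  have h := o.pi_mul 1 1
  rw [one_mul] at h
  have : o.pi (1 : Δ) + 0 = o.pi 1 + o.pi 1 := by rw [add_zero]; exact h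
  exact (add_left_cancel this).symm

lemma pi_inv' (u : Δ) : o.pi u⁻¹ = -o.pi u := by
  have h := o.pi_mul u u⁻¹
  rw [mul_inv_cancel, pi_one'] at h
  exact (neg_eq_of_add_eq_zero_right h.symm).symm

lemma phi_zero' : o.phi (0 : R) = 1 := by
  have h := o.phi_add 0 0
  rw [add_zero] at h
  have : o.phi (0 : R) * 1 = o.phi 0 * o.phi 0 := by rw [mul_one]; exact h
  exact (mul_left_cancel this).symm

lemma conj_zero' : o.conj (0 : R) = 0 := by
  have h := o.conj_add 0 0
  rw [add_zero] at h
  have : o.conj (0 : R) + 0 = o.conj 0 + o.conj 0 := by rw [add_zero]; exact h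
  exact (add_left_cancel this).symm

lemma act_zero' (u : Δ) : o.act u 0 = 1 := by
  have h := o.act_addR u 0 0
  rw [add_zero] at h
  simp only [conj_zero', zero_mul, mul_zero, phi_zero', mul_one] at h
  have : o.act u (0 : R) * 1 = o.act u 0 * o.act u 0 := by rw [mul_one]; exact h
  exact (mul_left_cancel this).symm

end Basics

/-- Choice of an index distinct from `±i`, `±j` among `1, 2, 3`. -/
lemma pick_index (n : ℕ) (hn : 3 ≤ n) (i j : ℤ) :
    ∃ k : ℤ, 0 < k ∧ k.natAbs ≤ n ∧ k.natAbs ≠ i.natAbs ∧ k.natAbs ≠ j.natAbs := by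
  by_cases h1 : i.natAbs = 1 ∨ j.natAbs = 1
  · by_cases h2 : i.natAbs = 2 ∨ j.natAbs = 2
    · exact ⟨3, by omega, by omega, by omega, by omega⟩
    · exact ⟨2, by omega, by omega, by omega, by omega⟩
  · exact ⟨1, by omega, by omega, by omega, by omega⟩

end OddForm

open OddForm in
/-- Let `(R, Δ)` be an odd form ring with an orthogonal hyperbolic family of
rank `n ≥ 3` consisting of pairwise Morita equivalent hyperbolic pairs.  Then
the odd unitary Steinberg group `StU(R, Δ)`, defined by the generators
`X_{ij}(a)` (for `0 < |i|, |j| ≤ n`, `i ≠ ±j`, `a ∈ R_{ij}`) and `X_i(u)`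
(for `0 < |i| ≤ n`, `u ∈ Δ⁰_i`) with the relations (St0)–(St8), is perfect. -/
theorem steinberg_perfect {R Δ : Type*} [NonUnitalRing R] [Group Δ]
    (o : OddForm R Δ) (n : ℕ) (hn : 3 ≤ n) (e : ℤ → R) (q : ℤ → Δ)
    (hfam : IsOrthHFamily o n e q) (hmor : IsMoritaFamily o n e) :
    commutator (StU o n e) = ⊤ := by
  classical
  obtain ⟨hee, hconj, horth, hpiq, hrhoq, hactq⟩ := hfam
  set F : FreeGroup (StGen o n e) →* StU o n e := PresentedGroup.mk (stRels o n e) with hF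
  -- every relation maps to 1
  have hone : ∀ w ∈ stRels o n e, F w = 1 := by
    intro w hw
    exact (QuotientGroup.eq_one_iff w).mpr (Subgroup.subset_normalClosure hw)
  -- commutators lie in the commutator subgroup
  have KC : ∀ a b : StU o n e, ⁅a, b⁆ ∈ commutator (StU o n e) := by
    intro a b
    rw [commutator_def]
    exact Subgroup.commutator_mem_commutator (Subgroup.mem_top a) (Subgroup.mem_top b)
  -- congruence lemmas
  have y1c : ∀ g h : Sub1 o n e, g.1 = h.1 → F (X1 g) = F (X1 h) := by
    intro g h hgh
    exact congrArg (fun z => F (X1 z)) (Subtype.ext hgh)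
  have y2c : ∀ g h : Sub2 o n e, g.1 = h.1 → F (X2 g) = F (X2 h) := by
    intro g h hgh
    exact congrArg (fun z => F (X2 z)) (Subtype.ext hgh)
  -- relation (St1)
  have R1 : ∀ g h k : Sub1 o n e, g.1.1 = h.1.1 → g.1.2.1 = h.1.2.1 → k.1.1 = g.1.1 →
      k.1.2.1 = g.1.2.1 → k.1.2.2 = g.1.2.2 + h.1.2.2 → F (X1 g) * F (X1 h) = F (X1 k) := by
    intro g h k h1 h2 h3 h4 h5
    have hw := hone _ (Or.inr (Or.inl ⟨g, h, k, h1, h2, h3, h4, h5, rfl⟩))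
    rw [map_mul, map_mul, map_inv, mul_inv_eq_one] at hw
    exact hw
  -- relation (St2)
  have R2 : ∀ g h k : Sub2 o n e, g.1.1 = h.1.1 → k.1.1 = g.1.1 → k.1.2 = g.1.2 * h.1.2 →
      F (X2 g) * F (X2 h) = F (X2 k) := by
    intro g h k h1 h2 h3
    have hw := hone _ (Or.inr (Or.inr (Or.inl ⟨g, h, k, h1, h2, h3, rfl⟩)))
    rw [map_mul, map_mul, map_inv, mul_inv_eq_one] at hw
    exact hw
  -- relation (St4)
  have R4 : ∀ g h k : Sub1 o n e, g.1.2.1 = h.1.1 → g.1.1 ≠ h.1.2.1 → g.1.1 ≠ -h.1.2.1 →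
      k.1.1 = g.1.1 → k.1.2.1 = h.1.2.1 → k.1.2.2 = g.1.2.2 * h.1.2.2 →
      ⁅F (X1 g), F (X1 h)⁆ = F (X1 k) := by
    intro g h k h1 h2 h3 h4 h5 h6
    have hw := hone _ (Or.inr (Or.inr (Or.inr (Or.inr (Or.inl
      ⟨g, h, k, h1, h2, h3, h4, h5, h6, rfl⟩)))))
    rw [map_mul, map_inv, map_commutatorElement, mul_inv_eq_one] at hw
    exact hw
  -- relation (St5)
  have R5 : ∀ g h : Sub1 o n e, ∀ k : Sub2 o n e, g.1.2.1 = h.1.1 → h.1.2.1 = -g.1.1 →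
      k.1.1 = -g.1.1 → k.1.2 = o.phi (g.1.2.2 * h.1.2.2) →
      ⁅F (X1 g), F (X1 h)⁆ = F (X2 k) := by
    intro g h k h1 h2 h3 h4
    have hw := hone _ (Or.inr (Or.inr (Or.inr (Or.inr (Or.inr (Or.inl
      ⟨g, h, k, h1, h2, h3, h4, rfl⟩))))))
    rw [map_mul, map_inv, map_commutatorElement, mul_inv_eq_one] at hw
    exact hw
  -- relation (St8)
  have R8 : ∀ g : Sub2 o n e, ∀ h k : Sub1 o n e, ∀ l : Sub2 o n e,
      h.1.1 = g.1.1 → k.1.1 = -g.1.1 → k.1.2.1 = h.1.2.1 →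
      k.1.2.2 = o.rho g.1.2 * h.1.2.2 → l.1.1 = h.1.2.1 →
      l.1.2 = (o.act g.1.2 (-h.1.2.2))⁻¹ →
      ⁅F (X2 g), F (X1 h)⁆ = F (X1 k) * F (X2 l) := by
    intro g h k l h1 h2 h3 h4 h5 h6
    have hw := hone _ (Or.inr (Or.inr (Or.inr (Or.inr (Or.inr (Or.inr (Or.inr (Or.inr
      ⟨g, h, k, l, h1, h2, h3, h4, h5, h6, rfl⟩))))))))
    rw [map_mul, map_inv, map_mul, map_commutatorElement, mul_inv_eq_one] at hw
    exact hw
  -- trivial generators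
  have hzero1 : ∀ g : Sub1 o n e, g.1.2.2 = 0 → F (X1 g) = 1 := by
    intro g hg
    have h := R1 g g g rfl rfl rfl rfl (by rw [hg, add_zero])
    have h2 : F (X1 g) * F (X1 g) = F (X1 g) * 1 := by rw [h, mul_one]
    exact mul_left_cancel h2
  have hzero2 : ∀ g : Sub2 o n e, g.1.2 = 1 → F (X2 g) = 1 := by
    intro g hg
    have h := R2 g g g rfl rfl (by rw [hg, mul_one])
    have h2 : F (X2 g) * F (X2 g) = F (X2 g) * 1 := by rw [h, mul_one]
    exact mul_left_cancel h2
  -- idempotent absorption helpers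
  have lab : ∀ (s : ℤ), s ≠ 0 → s.natAbs ≤ n → ∀ x : R, e s * (e s * x) = e s * x := by
    intro s hs hsn x
    rw [← mul_assoc, hee s hs hsn]
  have rab : ∀ (s : ℤ), s ≠ 0 → s.natAbs ≤ n → ∀ x : R, (x * e s) * e s = x * e s := by
    intro s hs hsn x
    rw [mul_assoc, hee s hs hsn]
  -- from the two-sided sandwich property extract one-sided absorptions
  have habsL : ∀ (i j : ℤ), i ≠ 0 → i.natAbs ≤ n → ∀ x : R,
      x = e i * x * e j → e i * x = x := by
    intro i j hi hin x hx
    conv_lhs => rw [hx, ← mul_assoc, ← mul_assoc, hee i hi hin]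
    exact hx.symm
  have habsR : ∀ (i j : ℤ), j ≠ 0 → j.natAbs ≤ n → ∀ x : R,
      x = e i * x * e j → x * e j = x := by
    intro i j hj hjn x hx
    conv_lhs => rw [hx, mul_assoc, mul_assoc, hee j hj hjn, ← mul_assoc]
    exact hx.symm
  have sand2 : ∀ (i j : ℤ) (x : R), e i * x = x → x * e j = x → x = e i * x * e j := by
    intro i j x h1 h2
    rw [h1, h2]
  have sandM : ∀ (i j : ℤ) (x y : R), e i * x = x → y * e j = y →
      x * y = e i * (x * y) * e j := by
    intro i j x y h1 h2
    conv_rhs => rw [← mul_assoc, h1, mul_assoc, h2]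
  have mulL : ∀ (i : ℤ) (x y : R), e i * x = x → e i * (x * y) = x * y := by
    intro i x y h
    rw [← mul_assoc, h]
  have mulR : ∀ (j : ℤ) (x y : R), y * e j = y → (x * y) * e j = x * y := by
    intro j x y h
    rw [mul_assoc, h]
  -- sums of sandwiched elements are sandwiched
  have sumsand : ∀ (i j : ℤ) (t : List (ℤ × R × R)),
      (∀ p ∈ t, e i * p.2.1 = p.2.1 ∧ p.2.2 * e j = p.2.2) →
      (t.map fun p => p.2.1 * p.2.2).sum =
        e i * ((t.map fun p => p.2.1 * p.2.2).sum) * e j := by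
    intro i j t
    induction t with
    | nil => intro _; simp
    | cons p t ih =>
      intro h
      obtain ⟨h1, h2⟩ := h p (List.mem_cons_self)
      have ht := ih (fun q hq => h q (List.mem_cons_of_mem p hq))
      simp only [List.map_cons, List.sum_cons]
      rw [mul_add, add_mul, ← sandM i j _ _ h1 h2, ← ht]
  -- decomposition of `a = a e_j` via the index `±k` using Morita equivalence
  have decomp : ∀ (j k : ℤ), j ≠ 0 → j.natAbs ≤ n → k ≠ 0 → k.natAbs ≤ n → k ≠ j → k ≠ -j →
      ∀ a : R, a * e j = a →
      ∃ L : List (ℤ × R × R),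
        (∀ p ∈ L, (p.1 = k ∨ p.1 = -k) ∧ (∃ x, p.2.1 = a * x * e p.1) ∧
          (∃ y, p.2.2 = e p.1 * y * e j)) ∧
        a = (L.map fun p => p.2.1 * p.2.2).sum := by
    intro j k hj hjn hk hkn hkj hkj' a ha
    obtain ⟨l, hl⟩ := hmor j k hj hjn hk hkn
    refine ⟨l.flatMap fun p => [(k, a * p.1 * e k, e k * p.2 * e j),
      (-k, a * p.1 * e (-k), e (-k) * p.2 * e j)], ?_, ?_⟩
    · intro p hp
      rw [List.mem_flatMap] at hp
      obtain ⟨q, hq, hpq⟩ := hp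
      simp only [List.mem_cons, List.not_mem_nil, or_false] at hpq
      rcases hpq with rfl | rfl
      · exact ⟨Or.inl rfl, ⟨q.1, rfl⟩, ⟨q.2, rfl⟩⟩
      · exact ⟨Or.inr rfl, ⟨q.1, rfl⟩, ⟨q.2, rfl⟩⟩
    · have hkn' : (-k).natAbs ≤ n := by omega
      have hk' : (-k) ≠ 0 := by omega
      have key : ∀ m : List (R × R),
          a * ((m.map fun p => p.1 * (e k + e (-k)) * p.2).sum * e j) =
          ((m.flatMap fun p => [((k : ℤ), a * p.1 * e k, e k * p.2 * e j),
            (-k, a * p.1 * e (-k), e (-k) * p.2 * e j)]).map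
              fun p => p.2.1 * p.2.2).sum := by
        intro m
        induction m with
        | nil => simp
        | cons q t ih =>
          simp only [List.flatMap_cons, List.map_cons, List.map_append, List.sum_cons,
            List.sum_append, List.map_nil, List.sum_nil, add_zero]
          rw [add_mul, mul_add, ← ih]
          congr 1
          simp only [mul_add, add_mul, mul_assoc, lab k hk hkn, lab (-k) hk' hkn']
      have hjj : (e j + e (-j)) * e j = e j := by
        rw [add_mul, hee j hj hjn, horth (-j) j (by omega) (by omega) hj hjn (by omega),
          add_zero]
      calc a = a * e j := ha.symm
        _ = a * ((e j + e (-j)) * e j) := by rw [hjj]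
        _ = a * ((l.map fun p => p.1 * (e k + e (-k)) * p.2).sum * e j) := by rw [← hl]
        _ = _ := key l
  -- generic induction for short root generators
  have gen1 : ∀ (i j : ℤ), i ≠ 0 → i.natAbs ≤ n → j ≠ 0 → j.natAbs ≤ n → i ≠ j → i ≠ -j →
      ∀ L : List (ℤ × R × R),
      (∀ p ∈ L, p.1 ≠ 0 ∧ p.1.natAbs ≤ n ∧ i ≠ p.1 ∧ i ≠ -p.1 ∧ p.1 ≠ j ∧ p.1 ≠ -j ∧
        e i * p.2.1 = p.2.1 ∧ p.2.1 * e p.1 = p.2.1 ∧ e p.1 * p.2.2 = p.2.2 ∧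
        p.2.2 * e j = p.2.2) →
      ∀ g : Sub1 o n e, g.1.1 = i → g.1.2.1 = j →
        g.1.2.2 = (L.map fun p => p.2.1 * p.2.2).sum →
      F (X1 g) ∈ commutator (StU o n e) := by
    intro i j hi hin hj hjn hij hij' L
    induction L with
    | nil =>
      intro _ g _ _ h3
      rw [hzero1 g (by simpa using h3)]
      exact (commutator _).one_mem
    | cons p t ih =>
      intro hP g hg1 hg2 hg3
      obtain ⟨hs, hsn, his, his', hsj, hsj', hbL, hbR, hcL, hcR⟩ :=
        hP p (List.mem_cons_self)
      have hbc : p.2.1 * p.2.2 = e i * (p.2.1 * p.2.2) * e j := sandM i j _ _ hbL hcR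
      have hrest : (t.map fun p => p.2.1 * p.2.2).sum =
          e i * ((t.map fun p => p.2.1 * p.2.2).sum) * e j := by
        refine sumsand i j t fun q hq => ?_
        obtain ⟨_, _, _, _, _, _, hb, _, _, hc⟩ := hP q (List.mem_cons_of_mem p hq)
        exact ⟨hb, hc⟩
      have hsplit : F (X1 ⟨(i, j, p.2.1 * p.2.2), hi, hin, hj, hjn, hij, hij', hbc⟩) *
          F (X1 ⟨(i, j, (t.map fun p => p.2.1 * p.2.2).sum),
            hi, hin, hj, hjn, hij, hij', hrest⟩) = F (X1 g) := by
        refine R1 _ _ g rfl rfl hg1 hg2 ?_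
        rw [hg3]
        simp
      have hmem1 : F (X1 ⟨(i, j, p.2.1 * p.2.2), hi, hin, hj, hjn, hij, hij', hbc⟩) ∈
          commutator (StU o n e) := by
        have h4 := R4 ⟨(i, p.1, p.2.1), hi, hin, hs, hsn, his, his',
            sand2 i p.1 p.2.1 hbL hbR⟩
          ⟨(p.1, j, p.2.2), hs, hsn, hj, hjn, hsj, hsj', sand2 p.1 j p.2.2 hcL hcR⟩
          ⟨(i, j, p.2.1 * p.2.2), hi, hin, hj, hjn, hij, hij', hbc⟩
          rfl hij hij' rfl rfl rfl
        rw [← h4]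
        exact KC _ _
      have hmem2 := ih (fun q hq => hP q (List.mem_cons_of_mem p hq))
        ⟨(i, j, (t.map fun p => p.2.1 * p.2.2).sum), hi, hin, hj, hjn, hij, hij', hrest⟩
        rfl rfl rfl
      rw [← hsplit]
      exact (commutator _).mul_mem hmem1 hmem2
  -- main lemma for short root generators
  have main1 : ∀ g : Sub1 o n e, F (X1 g) ∈ commutator (StU o n e) := by
    rintro ⟨⟨i, j, a⟩, hi, hin, hj, hjn, hij, hij', ha⟩
    obtain ⟨k, hkpos, hkn, hki, hkj⟩ := pick_index n hn i j
    have hk : k ≠ 0 := by omega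
    obtain ⟨L, hLmem, hLsum⟩ := decomp j k hj hjn hk hkn (by omega) (by omega) a
      (habsR i j hj hjn a ha)
    refine gen1 i j hi hin hj hjn hij hij' L ?_
      ⟨(i, j, a), hi, hin, hj, hjn, hij, hij', ha⟩ rfl rfl hLsum
    intro p hp
    obtain ⟨hpk, ⟨x, hx⟩, ⟨y, hy⟩⟩ := hLmem p hp
    have hp0 : p.1 ≠ 0 := by rcases hpk with h | h <;> omega
    have hpn : p.1.natAbs ≤ n := by rcases hpk with h | h <;> omega
    have hip : i ≠ p.1 := by rcases hpk with h | h <;> omega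
    have hip' : i ≠ -p.1 := by rcases hpk with h | h <;> omega
    have hpj : p.1 ≠ j := by rcases hpk with h | h <;> omega
    have hpj' : p.1 ≠ -j := by rcases hpk with h | h <;> omega
    have hal : e i * a = a := habsL i j hi hin a ha
    refine ⟨hp0, hpn, hip, hip', hpj, hpj', ?_, ?_, ?_, ?_⟩
    · rw [hx, ← mul_assoc, ← mul_assoc, hal]
    · rw [hx]; exact rab p.1 hp0 hpn _
    · rw [hy, ← mul_assoc, ← mul_assoc, hee p.1 hp0 hpn]
    · rw [hy]; exact rab j hj hjn _
  -- validity of phi-elements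
  have phiSub : ∀ (j : ℤ), j ≠ 0 → j.natAbs ≤ n → ∀ d : R, e (-j) * d = d → d * e j = d →
      o.act (o.phi d) (e j) = o.phi d := by
    intro j hj hjn d h1 h2
    rw [o.phi_act, hconj j hj hjn, h1, h2]
  have pisub : ∀ d : R, esum e n * o.pi (o.phi d) = 0 := by
    intro d
    rw [o.pi_phi, mul_zero]
  -- generic induction for phi-generators
  have genphi : ∀ (j : ℤ) (hj : j ≠ 0) (hjn : j.natAbs ≤ n),
      ∀ L : List (ℤ × R × R),
      (∀ p ∈ L, p.1 ≠ 0 ∧ p.1.natAbs ≤ n ∧ p.1 ≠ j ∧ p.1 ≠ -j ∧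
        e (-j) * p.2.1 = p.2.1 ∧ p.2.1 * e p.1 = p.2.1 ∧ e p.1 * p.2.2 = p.2.2 ∧
        p.2.2 * e j = p.2.2) →
      ∀ g : Sub2 o n e, g.1.1 = j →
        g.1.2 = o.phi ((L.map fun p => p.2.1 * p.2.2).sum) →
      F (X2 g) ∈ commutator (StU o n e) := by
    intro j hj hjn L
    induction L with
    | nil =>
      intro _ g _ h2
      rw [hzero2 g (by rw [h2]; simp only [List.map_nil, List.sum_nil]; exact phi_zero' o)]
      exact (commutator _).one_mem
    | cons p t ih =>
      intro hP g hg1 hg2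
      obtain ⟨hs, hsn, hsj, hsj', hbL, hbR, hcL, hcR⟩ := hP p (List.mem_cons_self)
      have hS : (t.map fun p => p.2.1 * p.2.2).sum =
          e (-j) * ((t.map fun p => p.2.1 * p.2.2).sum) * e j := by
        refine sumsand (-j) j t fun q hq => ?_
        obtain ⟨_, _, _, _, hb, _, _, hc⟩ := hP q (List.mem_cons_of_mem p hq)
        exact ⟨hb, hc⟩
      have hbcL : e (-j) * (p.2.1 * p.2.2) = p.2.1 * p.2.2 := mulL _ _ _ hbL
      have hbcR : (p.2.1 * p.2.2) * e j = p.2.1 * p.2.2 := mulR _ _ _ hcR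
      have hsum : g.1.2 = o.phi (p.2.1 * p.2.2) *
          o.phi ((t.map fun p => p.2.1 * p.2.2).sum) := by
        rw [hg2]
        simp only [List.map_cons, List.sum_cons]
        exact o.phi_add _ _
      have hsplit := R2
        ⟨(j, o.phi (p.2.1 * p.2.2)), hj, hjn,
          phiSub j hj hjn _ hbcL hbcR, pisub _⟩
        ⟨(j, o.phi ((t.map fun p => p.2.1 * p.2.2).sum)), hj, hjn,
          phiSub j hj hjn _ (habsL (-j) j (by omega) (by omega) _ hS)
            (habsR (-j) j hj hjn _ hS), pisub _⟩
        g rfl hg1 hsum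
      have hmem1 : F (X2 (⟨(j, o.phi (p.2.1 * p.2.2)), hj, hjn,
          phiSub j hj hjn _ hbcL hbcR, pisub _⟩ : Sub2 o n e)) ∈
          commutator (StU o n e) := by
        have h5 := R5
          ⟨(-j, p.1, p.2.1), (by omega), (by omega), hs, hsn,
            (show -j ≠ p.1 by omega), (show -j ≠ -p.1 by omega),
            sand2 _ _ _ hbL hbR⟩
          ⟨(p.1, j, p.2.2), hs, hsn, hj, hjn, hsj, hsj', sand2 _ _ _ hcL hcR⟩
          ⟨(j, o.phi (p.2.1 * p.2.2)), hj, hjn,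
            phiSub j hj hjn _ hbcL hbcR, pisub _⟩
          rfl (show (j : ℤ) = -(-j) by omega) (show (j : ℤ) = -(-j) by omega) rfl
        rw [← h5]
        exact KC _ _
      have hmem2 := ih (fun q hq => hP q (List.mem_cons_of_mem p hq))
        ⟨(j, o.phi ((t.map fun p => p.2.1 * p.2.2).sum)), hj, hjn,
          phiSub j hj hjn _ (habsL (-j) j (by omega) (by omega) _ hS)
            (habsR (-j) j hj hjn _ hS), pisub _⟩ rfl rfl
      rw [← hsplit]
      exact (commutator _).mul_mem hmem1 hmem2
  -- every phi-generator lies in the commutator subgroup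
  have mainphi : ∀ (j : ℤ), j ≠ 0 → j.natAbs ≤ n → ∀ c : R, e (-j) * c = c → c * e j = c →
      ∀ g : Sub2 o n e, g.1.1 = j → g.1.2 = o.phi c →
      F (X2 g) ∈ commutator (StU o n e) := by
    intro j hj hjn c hcL hcR g hg1 hg2
    obtain ⟨k, hkpos, hkn, hkj, -⟩ := pick_index n hn j j
    have hk : k ≠ 0 := by omega
    obtain ⟨L, hLmem, hLsum⟩ := decomp j k hj hjn hk hkn (by omega) (by omega) c hcR
    refine genphi j hj hjn L ?_ g hg1 (by rw [hg2, hLsum])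
    intro p hp
    obtain ⟨hpk, ⟨x, hx⟩, ⟨y, hy⟩⟩ := hLmem p hp
    have hp0 : p.1 ≠ 0 := by rcases hpk with h | h <;> omega
    have hpn : p.1.natAbs ≤ n := by rcases hpk with h | h <;> omega
    have hpj : p.1 ≠ j := by rcases hpk with h | h <;> omega
    have hpj' : p.1 ≠ -j := by rcases hpk with h | h <;> omega
    refine ⟨hp0, hpn, hpj, hpj', ?_, ?_, ?_, ?_⟩
    · rw [hx, ← mul_assoc, ← mul_assoc, hcL]
    · rw [hx]; exact rab p.1 hp0 hpn _
    · rw [hy, ← mul_assoc, ← mul_assoc, hee p.1 hp0 hpn]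
    · rw [hy]; exact rab j hj hjn _
  -- main lemma for ultrashort generators
  have main2 : ∀ g : Sub2 o n e, F (X2 g) ∈ commutator (StU o n e) := by
    rintro ⟨⟨j, v⟩, hj, hjn, hv, hvpi⟩
    obtain ⟨k, hkpos, hkn, hkj, -⟩ := pick_index n hn j j
    have hk : k ≠ 0 := by omega
    have hej : e j * e j = e j := hee j hj hjn
    obtain ⟨L, hLmem, hLsum⟩ := decomp j k hj hjn hk hkn (by omega) (by omega) (e j) hej
    have hP : ∀ p ∈ L, p.1 ≠ 0 ∧ p.1.natAbs ≤ n ∧ p.1 ≠ j ∧ p.1 ≠ -j ∧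
        e j * p.2.1 = p.2.1 ∧ p.2.1 * e p.1 = p.2.1 ∧ e p.1 * p.2.2 = p.2.2 ∧
        p.2.2 * e j = p.2.2 := by
      intro p hp
      obtain ⟨hpk, ⟨x, hx⟩, ⟨y, hy⟩⟩ := hLmem p hp
      have hp0 : p.1 ≠ 0 := by rcases hpk with h | h <;> omega
      have hpn : p.1.natAbs ≤ n := by rcases hpk with h | h <;> omega
      have hpj : p.1 ≠ j := by rcases hpk with h | h <;> omega
      have hpj' : p.1 ≠ -j := by rcases hpk with h | h <;> omega
      refine ⟨hp0, hpn, hpj, hpj', ?_, ?_, ?_, ?_⟩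
      · rw [hx, ← mul_assoc, ← mul_assoc, hej]
      · rw [hx]; exact rab p.1 hp0 hpn _
      · rw [hy, ← mul_assoc, ← mul_assoc, hee p.1 hp0 hpn]
      · rw [hy]; exact rab j hj hjn _
    -- validity of `v · x` for `x e_j = x`
    have actSub : ∀ x : R, x * e j = x →
        o.act (o.act v x) (e j) = o.act v x ∧ esum e n * o.pi (o.act v x) = 0 := by
      intro x hx
      constructor
      · rw [o.act_act, hx]
      · rw [o.pi_act, ← mul_assoc, hvpi, zero_mul]
    -- generic induction
    have gen2 : ∀ M : List (ℤ × R × R),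
        (∀ p ∈ M, p.1 ≠ 0 ∧ p.1.natAbs ≤ n ∧ p.1 ≠ j ∧ p.1 ≠ -j ∧
          e j * p.2.1 = p.2.1 ∧ p.2.1 * e p.1 = p.2.1 ∧ e p.1 * p.2.2 = p.2.2 ∧
          p.2.2 * e j = p.2.2) →
        ∀ g : Sub2 o n e, g.1.1 = j →
          g.1.2 = o.act v ((M.map fun p => p.2.1 * p.2.2).sum) →
        F (X2 g) ∈ commutator (StU o n e) := by
      intro M
      induction M with
      | nil =>
        intro _ g _ h2
        have hz : g.1.2 = 1 := by
          rw [h2]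
          simp only [List.map_nil, List.sum_nil]
          exact act_zero' o v
        rw [hzero2 g hz]
        exact (commutator _).one_mem
      | cons p t ih =>
        intro hQ g hg1 hg2
        obtain ⟨hs, hsn, hsj, hsj', hbL, hbR, hcL, hcR⟩ := hQ p (List.mem_cons_self)
        have hS2 : (t.map fun p => p.2.1 * p.2.2).sum =
            e j * ((t.map fun p => p.2.1 * p.2.2).sum) * e j := by
          refine sumsand j j t fun q hq => ?_
          obtain ⟨_, _, _, _, hb, _, _, hc⟩ := hQ q (List.mem_cons_of_mem p hq)
          exact ⟨hb, hc⟩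
        have hSR : ((t.map fun p => p.2.1 * p.2.2).sum) * e j =
            (t.map fun p => p.2.1 * p.2.2).sum := habsR j j hj hjn _ hS2
        have hbcR : (p.2.1 * p.2.2) * e j = p.2.1 * p.2.2 := mulR _ _ _ hcR
        -- properties of the phi-entry
        have hcS : e (-j) * o.conj ((t.map fun p => p.2.1 * p.2.2).sum) =
            o.conj ((t.map fun p => p.2.1 * p.2.2).sum) := by
          conv_rhs => rw [← hSR]
          rw [o.conj_mul, hconj j hj hjn]
        have hdL : e (-j) * (o.conj ((t.map fun p => p.2.1 * p.2.2).sum) * o.rho v *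
            (p.2.1 * p.2.2)) = o.conj ((t.map fun p => p.2.1 * p.2.2).sum) * o.rho v *
            (p.2.1 * p.2.2) := mulL _ _ _ (mulL _ _ _ hcS)
        have hdR : (o.conj ((t.map fun p => p.2.1 * p.2.2).sum) * o.rho v *
            (p.2.1 * p.2.2)) * e j = o.conj ((t.map fun p => p.2.1 * p.2.2).sum) *
            o.rho v * (p.2.1 * p.2.2) := mulR _ _ _ hbcR
        -- expansion of the action on the sum
        have hexp : g.1.2 = o.act v (p.2.1 * p.2.2) *
            o.phi (o.conj ((t.map fun p => p.2.1 * p.2.2).sum) * o.rho v *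
              (p.2.1 * p.2.2)) *
            o.act v ((t.map fun p => p.2.1 * p.2.2).sum) := by
          rw [hg2]
          simp only [List.map_cons, List.sum_cons]
          exact o.act_addR v _ _
        -- the three pieces
        have hsplit1 := R2
          ⟨(j, o.act v (p.2.1 * p.2.2)), hj, hjn, (actSub _ hbcR).1, (actSub _ hbcR).2⟩
          ⟨(j, o.phi (o.conj ((t.map fun p => p.2.1 * p.2.2).sum) * o.rho v *
              (p.2.1 * p.2.2))), hj, hjn, phiSub j hj hjn _ hdL hdR, pisub _⟩
          ⟨(j, o.act v (p.2.1 * p.2.2) *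
              o.phi (o.conj ((t.map fun p => p.2.1 * p.2.2).sum) * o.rho v *
                (p.2.1 * p.2.2))), hj, hjn,
            (by rw [o.act_mul, (actSub _ hbcR).1, phiSub j hj hjn _ hdL hdR]),
            (by rw [o.pi_mul, mul_add, (actSub _ hbcR).2, pisub _, add_zero])⟩
          rfl rfl rfl
        have hsplit2 := R2
          ⟨(j, o.act v (p.2.1 * p.2.2) *
              o.phi (o.conj ((t.map fun p => p.2.1 * p.2.2).sum) * o.rho v *
                (p.2.1 * p.2.2))), hj, hjn,
            (by rw [o.act_mul, (actSub _ hbcR).1, phiSub j hj hjn _ hdL hdR]),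
            (by rw [o.pi_mul, mul_add, (actSub _ hbcR).2, pisub _, add_zero])⟩
          ⟨(j, o.act v ((t.map fun p => p.2.1 * p.2.2).sum)), hj, hjn,
            (actSub _ hSR).1, (actSub _ hSR).2⟩
          g rfl hg1 hexp
        -- membership of the action piece via (St8)
        have hmem1 : F (X2 (⟨(j, o.act v (p.2.1 * p.2.2)), hj, hjn,
            (actSub _ hbcR).1, (actSub _ hbcR).2⟩ : Sub2 o n e)) ∈
            commutator (StU o n e) := by
          have hu1 : o.act (o.act v p.2.1) (e p.1) = o.act v p.2.1 := by
            rw [o.act_act, hbR]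
          have hu2 : esum e n * o.pi (o.act v p.2.1) = 0 := by
            rw [o.pi_act, ← mul_assoc, hvpi, zero_mul]
          have hnc : -p.2.2 = e p.1 * -p.2.2 * e j := by
            rw [mul_neg, neg_mul, ← sand2 p.1 j p.2.2 hcL hcR]
          have hcb : e (-p.1) * o.conj p.2.1 = o.conj p.2.1 := by
            conv_rhs => rw [← hbR]
            rw [o.conj_mul, hconj p.1 hs hsn]
          have hρL : e (-p.1) * o.rho (o.act v p.2.1) = o.rho (o.act v p.2.1) := by
            rw [o.rho_act]
            exact mulL _ _ _ (mulL _ _ _ hcb)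
          have hkL : e (-p.1) * (o.rho (o.act v p.2.1) * -p.2.2) =
              o.rho (o.act v p.2.1) * -p.2.2 := mulL _ _ _ hρL
          have hncR : (-p.2.2) * e j = -p.2.2 := by rw [neg_mul, hcR]
          have hkR : (o.rho (o.act v p.2.1) * -p.2.2) * e j =
              o.rho (o.act v p.2.1) * -p.2.2 := mulR _ _ _ hncR
          have hlact : o.act ((o.act (o.act v p.2.1) p.2.2)⁻¹) (e j) =
              (o.act (o.act v p.2.1) p.2.2)⁻¹ := by
            rw [act_inv']
            exact congrArg Inv.inv (by rw [o.act_act, hcR])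
          have hlpi : esum e n * o.pi ((o.act (o.act v p.2.1) p.2.2)⁻¹) = 0 := by
            rw [pi_inv', o.pi_act, o.pi_act, mul_neg, ← mul_assoc, ← mul_assoc,
              hvpi, zero_mul, zero_mul, neg_zero]
          have h8 := R8
            ⟨(p.1, o.act v p.2.1), hs, hsn, hu1, hu2⟩
            ⟨(p.1, j, -p.2.2), hs, hsn, hj, hjn, hsj, hsj', hnc⟩
            ⟨(-p.1, j, o.rho (o.act v p.2.1) * -p.2.2), (by omega), (by omega), hj, hjn,
              (show -p.1 ≠ j by omega), (show -p.1 ≠ -j by omega),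
              sand2 _ _ _ hkL hkR⟩
            ⟨(j, (o.act (o.act v p.2.1) p.2.2)⁻¹), hj, hjn, hlact, hlpi⟩
            rfl rfl rfl rfl rfl
            (show (o.act (o.act v p.2.1) p.2.2)⁻¹ =
              (o.act (o.act v p.2.1) (-(-p.2.2)))⁻¹ by rw [neg_neg])
          have hgl : F (X2 (⟨(j, (o.act (o.act v p.2.1) p.2.2)⁻¹), hj, hjn,
              hlact, hlpi⟩ : Sub2 o n e)) ∈ commutator (StU o n e) := by
            have heq : F (X2 (⟨(j, (o.act (o.act v p.2.1) p.2.2)⁻¹), hj, hjn,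
                hlact, hlpi⟩ : Sub2 o n e)) =
                (F (X1 ⟨(-p.1, j, o.rho (o.act v p.2.1) * -p.2.2), (by omega),
                  (by omega), hj, hjn, (show -p.1 ≠ j by omega),
                  (show -p.1 ≠ -j by omega), sand2 _ _ _ hkL hkR⟩))⁻¹ *
                ⁅F (X2 ⟨(p.1, o.act v p.2.1), hs, hsn, hu1, hu2⟩),
                  F (X1 ⟨(p.1, j, -p.2.2), hs, hsn, hj, hjn, hsj, hsj', hnc⟩)⁆ :=
              eq_inv_mul_of_mul_eq h8.symm
            rw [heq]
            exact (commutator _).mul_mem ((commutator _).inv_mem (main1 _)) (KC _ _)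
          have hinv : F (X2 (⟨(j, o.act v (p.2.1 * p.2.2)), hj, hjn,
              (actSub _ hbcR).1, (actSub _ hbcR).2⟩ : Sub2 o n e)) =
              (F (X2 (⟨(j, (o.act (o.act v p.2.1) p.2.2)⁻¹), hj, hjn,
                hlact, hlpi⟩ : Sub2 o n e)))⁻¹ := by
            have hR := R2
              ⟨(j, o.act v (p.2.1 * p.2.2)), hj, hjn,
                (actSub _ hbcR).1, (actSub _ hbcR).2⟩
              ⟨(j, (o.act (o.act v p.2.1) p.2.2)⁻¹), hj, hjn, hlact, hlpi⟩
              ⟨(j, (1 : Δ)), hj, hjn, (by rw [act_one' o]), (by rw [pi_one' o, mul_zero])⟩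
              rfl rfl
              (show (1 : Δ) = o.act v (p.2.1 * p.2.2) *
                (o.act (o.act v p.2.1) p.2.2)⁻¹ by
                rw [← o.act_act, mul_inv_cancel])
            refine eq_inv_of_mul_eq_one_left ?_
            rw [hR]
            exact hzero2 _ rfl
          rw [hinv]
          exact (commutator _).inv_mem hgl
        have hmem2 : F (X2 (⟨(j, o.phi (o.conj ((t.map fun p => p.2.1 * p.2.2).sum) *
            o.rho v * (p.2.1 * p.2.2))), hj, hjn, phiSub j hj hjn _ hdL hdR,
            pisub _⟩ : Sub2 o n e)) ∈ commutator (StU o n e) :=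
          mainphi j hj hjn _ hdL hdR _ rfl rfl
        have hmem3 := ih (fun q hq => hQ q (List.mem_cons_of_mem p hq))
          ⟨(j, o.act v ((t.map fun p => p.2.1 * p.2.2).sum)), hj, hjn,
            (actSub _ hSR).1, (actSub _ hSR).2⟩ rfl rfl
        have hEq : F (X2 g) = F (X2 (⟨(j, o.act v (p.2.1 * p.2.2)), hj, hjn,
            (actSub _ hbcR).1, (actSub _ hbcR).2⟩ : Sub2 o n e)) *
            F (X2 (⟨(j, o.phi (o.conj ((t.map fun p => p.2.1 * p.2.2).sum) *
              o.rho v * (p.2.1 * p.2.2))), hj, hjn, phiSub j hj hjn _ hdL hdR,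
              pisub _⟩ : Sub2 o n e)) *
            F (X2 (⟨(j, o.act v ((t.map fun p => p.2.1 * p.2.2).sum)), hj, hjn,
              (actSub _ hSR).1, (actSub _ hSR).2⟩ : Sub2 o n e)) := by
          rw [hsplit1, hsplit2]
        rw [hEq]
        exact (commutator _).mul_mem ((commutator _).mul_mem hmem1 hmem2) hmem3
    exact gen2 L hP ⟨(j, v), hj, hjn, hv, hvpi⟩ rfl
      (show v = o.act v ((L.map fun p => p.2.1 * p.2.2).sum) by
        rw [← hLsum]; exact hv.symm)
  -- conclusion
  rw [eq_top_iff]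
  intro x _
  refine PresentedGroup.induction_on x ?_
  intro w
  show F w ∈ commutator (StU o n e)
  induction w using FreeGroup.induction_on with
  | C1 => rw [map_one]; exact (commutator (StU o n e)).one_mem
  | of s =>
    cases s with
    | inl g => exact main1 g
    | inr g => exact main2 g
  | inv_of s hs =>
    rw [map_inv]
    exact (commutator (StU o n e)).inv_mem hs
  | mul a b ha hb =>
    rw [map_mul]
    exact (commutator (StU o n e)).mul_mem ha hb
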